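/- Assume k is even and tr(a) = 1. For x ∈ F, let ℓ be the number of common neighbours of the vertices x and ∞ in G_k(a), let ε = 1 if tr(x) = 0 (i.e. x and ∞ are adjacent) and ε = 0 otherwise, and let K = ∑_{z ∈ F, z ≠ 0} (−1)^{tr(z + (x² + x + a)/z)} (an integer). Then 4ℓ = q + 1 + K − 4ε. -/

import Mathlib

/-- The absolute trace `tr(x) = x + x² + x⁴ + ⋯ + x^{2^{k-1}}` of a finite field
of order `2^k`, taking values in the prime subfield `{0, 1} ⊆ F`. -/
def fieldTr {F : Type*} [Field F] (k : ℕ) (x : F) : F :=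
  ∑ i ∈ Finset.range k, x ^ (2 ^ i)

/-- The defining relation of the graph `G_k(a)` on the vertex set `F ∪ {∞}`
(with `∞ = none`): distinct `x, y ∈ F` are related iff
`tr((xy + x + a)/(x + y)) = 0`, and `x ∈ F` is related to `∞` iff `tr(x) = 0`. -/
def adjRel {F : Type*} [Field F] (k : ℕ) (a : F) : Option F → Option F → Prop
  | some x, some y => fieldTr k ((x * y + x + a) / (x + y)) = 0
  | some x, none   => fieldTr k x = 0
  | none,   some y => fieldTr k y = 0
  | none,   none   => False

/-- The graph `G_k(a)` on the vertex set `F ∪ {∞}`.  (When `tr(1) = 0`, the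
relation `adjRel` is symmetric on distinct vertices, so `fromRel` produces
exactly the graph whose adjacency is given by `adjRel`.) -/
def Gka {F : Type*} [Field F] (k : ℕ) (a : F) : SimpleGraph (Option F) :=
  SimpleGraph.fromRel (adjRel k a)

/-- The additive character `ψ(z) = (−1)^{tr(z)}`. -/
def psi {F : Type*} [Field F] [DecidableEq F] (k : ℕ) (z : F) : ℤ :=
  if fieldTr k z = 0 then 1 else -1

/-!
Since `tr(1) = 0`, the adjacency condition is symmetric.  Substituting `y = x + z`, a common
neighbour `y` of `x` and `∞` corresponds to `z ≠ 0` with `tr(x + z) = 0 = tr(x + c/z)`, where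
`c = x² + x + a`.  Writing each condition as `(1 + ψ(·))/2`, using `ψ(x + u) = ψ(x) ψ(u)` and
expanding, the sums `∑ ψ(z)` and `∑ ψ(c/z)` over `z ≠ 0` are both `-1` because `ψ` is a
nontrivial character and `c ≠ 0` (as `tr(c) = tr(a) = 1`); the remaining product term is the
Kloosterman sum `∑ ψ(z + c/z)`.
-/

open Finset

section fieldTr

variable {F : Type*} [Field F] (k : ℕ)

lemma fieldTr_zero : fieldTr k (0 : F) = 0 := by
  simp [fieldTr]

lemma fieldTr_sq [Fintype F] (hcard : Fintype.card F = 2 ^ k) (u : F) :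
    fieldTr k (u ^ 2) = fieldTr k u := by
  have hfrob : u ^ 2 ^ k = u := by rw [← hcard, FiniteField.pow_card]
  have hshift := (sum_range_succ' (fun i => u ^ 2 ^ i) k).symm.trans (sum_range_succ _ k)
  simp only [hfrob, pow_zero, pow_one] at hshift
  simpa only [fieldTr, ← pow_mul, ← pow_succ'] using add_right_cancel hshift

variable [CharP F 2]

lemma fieldTr_add (u v : F) : fieldTr k (u + v) = fieldTr k u + fieldTr k v := by
  simp only [fieldTr, ← sum_add_distrib, add_pow_char_pow]

lemma fieldTr_one_of_even (hk : Even k) : fieldTr k (1 : F) = 0 := by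
  simpa [fieldTr] using (CharP.cast_eq_zero_iff F 2 k).mpr hk.two_dvd

lemma fieldTr_eq_zero_or_one [Fintype F] (hcard : Fintype.card F = 2 ^ k) (u : F) :
    fieldTr k u = 0 ∨ fieldTr k u = 1 := by
  refine IsIdempotentElem.iff_eq_zero_or_one.mp ?_
  calc fieldTr k u * fieldTr k u = fieldTr k (u ^ 2) := by
        rw [← sq, fieldTr, sum_pow_char]
        exact sum_congr rfl fun i _ => pow_right_comm u _ _
    _ = fieldTr k u := fieldTr_sq k hcard u

lemma fieldTr_sq_add_self [Fintype F] (hcard : Fintype.card F = 2 ^ k) (u : F) :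
    fieldTr k (u ^ 2 + u) = 0 := by
  rw [fieldTr_add, fieldTr_sq k hcard, CharTwo.add_self_eq_zero]

end fieldTr

section psi

variable {F : Type*} [Field F] [DecidableEq F] (k : ℕ)

lemma psi_eq_two_mul_ite_sub_one (u : F) :
    psi k u = 2 * (if fieldTr k u = 0 then 1 else 0) - 1 := by
  unfold psi; split_ifs <;> norm_num

lemma psi_zero : psi k (0 : F) = 1 := by
  simp [psi, fieldTr_zero]

lemma psi_mul_self (u : F) : psi k u * psi k u = 1 := by
  unfold psi; split_ifs <;> norm_num

lemma psi_of_fieldTr_eq_one {u : F} (hu : fieldTr k u = 1) : psi k u = -1 := by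
  simp [psi, hu]

variable [CharP F 2] [Fintype F]

lemma psi_add (hcard : Fintype.card F = 2 ^ k) (u v : F) :
    psi k (u + v) = psi k u * psi k v := by
  rcases fieldTr_eq_zero_or_one k hcard u with hu | hu <;>
    rcases fieldTr_eq_zero_or_one k hcard v with hv | hv <;>
    simp [psi, fieldTr_add, hu, hv, CharTwo.add_self_eq_zero]

lemma sum_psi_eq_zero (hcard : Fintype.card F = 2 ^ k) {a : F} (ha : fieldTr k a = 1) :
    ∑ z : F, psi k z = 0 := by
  have hshift : ∑ z : F, psi k (z + a) = ∑ z : F, psi k z := Equiv.sum_comp (Equiv.addRight a) _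
  simp only [psi_add k hcard, psi_of_fieldTr_eq_one k ha, mul_neg_one, sum_neg_distrib] at hshift
  linarith

lemma sum_erase_zero_psi_perm (hcard : Fintype.card F = 2 ^ k) {a : F} (ha : fieldTr k a = 1)
    (σ : Equiv.Perm F) (hσ : σ 0 = 0) :
    ∑ z ∈ univ.erase 0, psi k (σ z) = -1 := by
  rw [sum_erase_eq_sub (mem_univ 0), Equiv.sum_comp σ (psi k), sum_psi_eq_zero k hcard ha, hσ,
    psi_zero, zero_sub]

end psi

lemma four_mul_card_filter_fieldTr_eq_zero {F ι : Type*} [Field F] [DecidableEq F] (k : ℕ)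
    (s : Finset ι) (f g : ι → F) :
    4 * (#{i ∈ s | fieldTr k (f i) = 0 ∧ fieldTr k (g i) = 0} : ℤ) =
      ∑ i ∈ s, (1 + psi k (f i)) * (1 + psi k (g i)) := by
  rw [natCast_card_filter, mul_sum]
  refine sum_congr rfl fun i _ => ?_
  simp only [psi_eq_two_mul_ite_sub_one]
  split_ifs <;> simp_all

lemma sum_erase_eq_sum_erase_zero_add {G M : Type*} [AddGroup G] [Fintype G] [DecidableEq G]
    [AddCommGroup M] (f : G → M) (x : G) :
    ∑ y ∈ univ.erase x, f y = ∑ z ∈ univ.erase 0, f (x + z) := by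
  rw [sum_erase_eq_sub (mem_univ _), sum_erase_eq_sub (mem_univ _), add_zero,
    ← Equiv.sum_comp (Equiv.addLeft x) f]
  rfl

section graph

variable {F : Type*} [Field F] {k : ℕ} (a : F)

lemma Gka_adj_none_some {y : F} : (Gka k a).Adj none (some y) ↔ fieldTr k y = 0 := by
  simp [Gka, adjRel]

variable [CharP F 2]

lemma fieldTr_div_add_swap (hk : Even k) {x y : F} (hxy : x ≠ y) :
    fieldTr k ((y * x + y + a) / (y + x)) = fieldTr k ((x * y + x + a) / (x + y)) := by
  have hsum : x + y ≠ 0 := fun h => hxy (CharTwo.add_eq_zero.mp h)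
  have hswap : (y * x + y + a) / (y + x) = (x * y + x + a) / (x + y) + 1 := by
    rw [add_comm y x, div_add_one hsum]
    congr 1
    linear_combination (-x) * CharTwo.two_eq_zero (R := F)
  rw [hswap, fieldTr_add, fieldTr_one_of_even k hk, add_zero]

lemma Gka_adj_some_some (hk : Even k) {x y : F} :
    (Gka k a).Adj (some x) (some y) ↔ x ≠ y ∧ fieldTr k ((x * y + x + a) / (x + y)) = 0 := by
  simp only [Gka, SimpleGraph.fromRel_adj, adjRel, ne_eq, Option.some.injEq]
  exact and_congr_right fun hxy => by rw [fieldTr_div_add_swap a hk hxy, or_self]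

lemma commonNeighbors_some_none_eq [Fintype F] [DecidableEq F] (hk : Even k) (x : F) :
    (Gka k a).commonNeighbors (some x) none =
      some '' ↑{y ∈ univ.erase x |
        fieldTr k ((x * y + x + a) / (x + y)) = 0 ∧ fieldTr k y = 0} := by
  ext (_ | y)
  · simp [SimpleGraph.mem_commonNeighbors]
  · simp [SimpleGraph.mem_commonNeighbors, Gka_adj_some_some a hk, Gka_adj_none_some, ne_comm,
      and_assoc]

end graph

section count

variable {F : Type*} [Field F] [CharP F 2] [Fintype F] [DecidableEq F] {k : ℕ}

lemma four_mul_ncard_commonNeighbors_some_none (a : F) (hk : Even k) (x : F) :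
    4 * (((Gka k a).commonNeighbors (some x) none).ncard : ℤ) =
      ∑ z ∈ univ.erase 0, (1 + psi k (x + (x ^ 2 + x + a) / z)) * (1 + psi k (x + z)) := by
  have hshift : ∀ z ∈ univ.erase (0 : F),
      (x * (x + z) + x + a) / (x + (x + z)) = x + (x ^ 2 + x + a) / z := by
    intro z hz
    rw [← add_assoc, CharTwo.add_self_eq_zero, zero_add]
    field_simp [ne_of_mem_erase hz]
    ring
  rw [commonNeighbors_some_none_eq a hk, Set.ncard_image_of_injective _ (Option.some_injective F),
    Set.ncard_coe_finset, four_mul_card_filter_fieldTr_eq_zero, sum_erase_eq_sum_erase_zero_add]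
  exact sum_congr rfl fun z hz => by rw [hshift z hz]

lemma sum_erase_zero_one_add_psi_mul (hcard : Fintype.card F = 2 ^ k) {a : F}
    (ha : fieldTr k a = 1) {c : F} (hc : c ≠ 0) (x : F) :
    ∑ z ∈ univ.erase 0, (1 + psi k (x + c / z)) * (1 + psi k (x + z)) =
      Fintype.card F - 1 - 2 * psi k x + ∑ z ∈ univ.erase 0, psi k (z + c / z) := by
  have hterm : ∀ z, (1 + psi k (x + c / z)) * (1 + psi k (x + z)) =
      1 + psi k x * psi k z + psi k x * psi k (c / z) + psi k (z + c / z) := by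
    intro z
    simp only [psi_add k hcard]
    linear_combination (psi k z * psi k (c / z)) * psi_mul_self k x
  have hid : ∑ z ∈ univ.erase (0 : F), psi k z = -1 :=
    sum_erase_zero_psi_perm k hcard ha (Equiv.refl F) rfl
  have hinv : ∑ z ∈ univ.erase 0, psi k (c / z) = -1 :=
    sum_erase_zero_psi_perm k hcard ha
      (Function.Involutive.toPerm _ fun z => div_div_cancel₀ hc) (div_zero c)
  simp only [hterm, sum_add_distrib, ← mul_sum, hid, hinv, sum_const,
    card_erase_of_mem (mem_univ _), card_univ, nsmul_one, Nat.cast_pred Fintype.card_pos]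
  ring

end count

theorem codegree_with_infinity_eq_kloosterman
    {F : Type*} [Field F] [Fintype F] [DecidableEq F] [CharP F 2] (k : ℕ)
    (hk : Even k) (hcard : Fintype.card F = 2 ^ k) (a : F) (ha : fieldTr k a = 1)
    (x : F) :
    4 * (((Gka k a).commonNeighbors (some x) none).ncard : ℤ) =
      (Fintype.card F : ℤ) + 1 +
        (∑ z ∈ Finset.univ.erase (0 : F), psi k (z + (x ^ 2 + x + a) / z)) -
        4 * (if fieldTr k x = 0 then 1 else 0) := by
  have hc : x ^ 2 + x + a ≠ 0 := by
    intro h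
    have htr := congrArg (fieldTr k) h
    rw [fieldTr_add, fieldTr_sq_add_self k hcard, ha, fieldTr_zero, zero_add] at htr
    exact one_ne_zero htr
  rw [four_mul_ncard_commonNeighbors_some_none a hk x,
    sum_erase_zero_one_add_psi_mul hcard ha hc x, psi_eq_two_mul_ite_sub_one k x]
  split_ifs <;> ring
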